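/- The sets Φ_k for distinct k ≥ 1 are pairwise disjoint, where Φ_k = { 2^r · (q + (2k-1) · 2^{L(q)}) : r ≥ 0, q an odd fibbinary number }. -/

import Mathlib

/-- A natural number is fibbinary if its binary representation has no two consecutive 1 bits. -/
def Fibbinary (m : ℕ) : Prop := ∀ i : ℕ, ¬(m.testBit i ∧ m.testBit (i + 1))

def Phi (k : ℕ) : Set ℕ :=
  {m : ℕ | ∃ r q : ℕ, Odd q ∧ Fibbinary q ∧
    m = 2 ^ r * (q + (2 * k - 1) * 2 ^ Nat.size q)}

/-!
The odd part of an element of `Phi k` is `n = q + (2k - 1) 2^L(q)`. Since `q` is fibbinary and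
`2k - 1` is odd, the lowest pair of adjacent `1` bits of `n` sits at positions `L(q) - 1, L(q)`,
so `L(q)` can be read off `n`, and then so can `2k - 1 = ⌊n / 2^L(q)⌋`.
-/

namespace Nat

theorem testBit_size_sub_one {q : ℕ} (hq : q ≠ 0) : q.testBit (q.size - 1) = true := by
  have hs : 0 < q.size := size_pos.2 (pos_of_ne_zero hq)
  have hlo : 1 * 2 ^ (q.size - 1) ≤ q := by rw [one_mul]; exact lt_size.1 (by omega)
  have hhi : q < (1 + 1) * 2 ^ (q.size - 1) := by
    rw [mul_comm, ← pow_succ, Nat.sub_add_cancel hs]; exact lt_size_self q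
  rw [← zero_add (q.size - 1), ← testBit_div_two_pow, Nat.div_eq_of_lt_le hlo hhi]
  exact testBit_one_zero

theorem eq_of_two_pow_mul_eq_two_pow_mul {r₁ r₂ a b : ℕ} (ha : Odd a) (hb : Odd b)
    (h : 2 ^ r₁ * a = 2 ^ r₂ * b) : a = b := by
  wlog hr : r₁ ≤ r₂ generalizing r₁ r₂ a b
  · exact (this hb ha h.symm (le_of_not_ge hr)).symm
  obtain ⟨d, rfl⟩ := exists_add_of_le hr
  rw [pow_add, mul_assoc] at h
  have ha' : a = 2 ^ d * b := Nat.eq_of_mul_eq_mul_left (by positivity) h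
  rw [ha', odd_mul] at ha
  have hd : d = 0 := by
    by_contra hd
    exact not_even_iff_odd.2 ha.1 (Nat.even_pow.2 ⟨even_two, hd⟩)
  simpa [hd] using ha'

end Nat

open Nat

theorem testBit_add_mul_two_pow_size (q c j : ℕ) :
    (q + c * 2 ^ q.size).testBit j =
      if j < q.size then q.testBit j else c.testBit (j - q.size) := by
  rw [add_comm, mul_comm]
  exact testBit_two_pow_mul_add c (lt_size_self q) j

theorem add_mul_two_pow_size_div (q c : ℕ) : (q + c * 2 ^ q.size) / 2 ^ q.size = c := by
  rw [add_mul_div_right _ _ (by positivity), div_eq_of_lt (lt_size_self q), zero_add]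

theorem odd_add_mul_two_pow_size {q : ℕ} (hq : Odd q) (c : ℕ) : Odd (q + c * 2 ^ q.size) :=
  hq.add_even ((Nat.even_pow.2 ⟨even_two, (size_pos.2 hq.pos).ne'⟩).mul_left c)

theorem testBit_add_mul_two_pow_size_adjacent {q c : ℕ} (hq : q ≠ 0) (hc : Odd c) :
    (q + c * 2 ^ q.size).testBit (q.size - 1) ∧
      (q + c * 2 ^ q.size).testBit (q.size - 1 + 1) := by
  have hs : 0 < q.size := size_pos.2 (pos_of_ne_zero hq)
  simp only [testBit_add_mul_two_pow_size, Nat.sub_add_cancel hs]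
  simp [hs, testBit_size_sub_one hq, testBit_zero, odd_iff.1 hc]

theorem size_le_of_testBit_adjacent {q c i : ℕ} (hq : Fibbinary q)
    (h : (q + c * 2 ^ q.size).testBit i ∧ (q + c * 2 ^ q.size).testBit (i + 1)) :
    q.size ≤ i + 1 := by
  by_contra! hi
  simp only [testBit_add_mul_two_pow_size, hi, Nat.lt_of_succ_lt hi, if_true] at h
  exact hq i h

theorem eq_of_add_mul_two_pow_size_eq {q₁ q₂ c₁ c₂ : ℕ} (hq₁ : q₁ ≠ 0) (hq₂ : q₂ ≠ 0)
    (hf₁ : Fibbinary q₁) (hf₂ : Fibbinary q₂) (hc₁ : Odd c₁) (hc₂ : Odd c₂)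
    (h : q₁ + c₁ * 2 ^ q₁.size = q₂ + c₂ * 2 ^ q₂.size) : c₁ = c₂ := by
  have hsize : q₁.size = q₂.size := by
    have h₁₂ := size_le_of_testBit_adjacent hf₁ (h ▸ testBit_add_mul_two_pow_size_adjacent hq₂ hc₂)
    have h₂₁ := size_le_of_testBit_adjacent hf₂ (h ▸ testBit_add_mul_two_pow_size_adjacent hq₁ hc₁)
    have hs₁ := size_pos.2 (pos_of_ne_zero hq₁)
    have hs₂ := size_pos.2 (pos_of_ne_zero hq₂)
    omega
  calc c₁ = (q₁ + c₁ * 2 ^ q₁.size) / 2 ^ q₁.size := (add_mul_two_pow_size_div q₁ c₁).symm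
    _ = (q₂ + c₂ * 2 ^ q₂.size) / 2 ^ q₂.size := by rw [h, hsize]
    _ = c₂ := add_mul_two_pow_size_div q₂ c₂

theorem phi_pairwise_disjoint (k₁ k₂ : ℕ) (hk₁ : 1 ≤ k₁) (hk₂ : 1 ≤ k₂) (h : k₁ ≠ k₂) :
    Disjoint (Phi k₁) (Phi k₂) := by
  rw [Set.disjoint_left]
  rintro m ⟨r₁, q₁, hq₁, hf₁, rfl⟩ ⟨r₂, q₂, hq₂, hf₂, hm⟩
  have hc₁ : Odd (2 * k₁ - 1) := ⟨k₁ - 1, by omega⟩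
  have hc₂ : Odd (2 * k₂ - 1) := ⟨k₂ - 1, by omega⟩
  have hodd_part := eq_of_two_pow_mul_eq_two_pow_mul
    (odd_add_mul_two_pow_size hq₁ _) (odd_add_mul_two_pow_size hq₂ _) hm
  have hc : 2 * k₁ - 1 = 2 * k₂ - 1 :=
    eq_of_add_mul_two_pow_size_eq hq₁.pos.ne' hq₂.pos.ne' hf₁ hf₂ hc₁ hc₂ hodd_part
  omega
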